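/- arXiv:1806.00642 — 9 statements merged into one kernel-verified Lean document; each statement's English description precedes it below -/
import Mathlib

section
/- Let P be a poset and Γ a standard closure operator whose lattice L_Γ of closed sets is, for every standard closure operator Γ' ≤ Γ, the target of a finite-meet-preserving canonical map Γ(-) : L_{Γ'} → L_Γ. Then L_Γ is a frame. -/
variable {P : Type*} [PartialOrder P]

/-- Down-closure of a set. -/
def dcl (S : Set P) : Set P := {p | ∃ s ∈ S, p ≤ s}

/-- Principal downset. -/
def pd (p : P) : Set P := {q | q ≤ p}

/-- Standard closure operator: extensive, monotone, idempotent, with Γ({p}) = p↓. -/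
def IsStdClosure (Γ : Set P → Set P) : Prop :=
  (∀ S, S ⊆ Γ S) ∧ (∀ S T : Set P, S ⊆ T → Γ S ⊆ Γ T) ∧ (∀ S, Γ (Γ S) = Γ S) ∧
    ∀ p : P, Γ {p} = pd p

def IsClosedIn (Γ : Set P → Set P) (C : Set P) : Prop := Γ C = C

/-- Join-specification: all joins of members exist, and all singletons belong. -/
def IsJoinSpec (𝒰 : Set (Set P)) : Prop :=
  (∀ S ∈ 𝒰, ∃ x : P, IsLUB S x) ∧ ∀ p : P, {p} ∈ 𝒰

/-- 𝒰-ideal: down-closed and closed under joins of members of 𝒰. -/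
def IsUIdeal (𝒰 : Set (Set P)) (I : Set P) : Prop :=
  IsLowerSet I ∧ ∀ S ∈ 𝒰, S ⊆ I → ∀ x : P, IsLUB S x → x ∈ I

/-- The smallest 𝒰-ideal containing S. -/
def GammaU (𝒰 : Set (Set P)) (S : Set P) : Set P :=
  ⋂₀ {I : Set P | IsUIdeal 𝒰 I ∧ S ⊆ I}

/-- 𝒰⁺: sets whose join exists and lies in the 𝒰-ideal closure. -/
def UPlus (𝒰 : Set (Set P)) : Set (Set P) :=
  {S : Set P | ∃ x : P, IsLUB S x ∧ x ∈ GammaU 𝒰 S}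

/-- Υ_𝒰(S) = { ⋁T : T ∈ 𝒰⁺, T ⊆ S↓ }. -/
def Upsilon (𝒰 : Set (Set P)) (S : Set P) : Set P :=
  {x : P | ∃ T ∈ UPlus 𝒰, T ⊆ dcl S ∧ IsLUB T x}

/-- The complete lattice of 𝒰-ideals (meets = intersections, joins = closure of unions)
is a frame. -/
def IdealFrame (𝒰 : Set (Set P)) : Prop :=
  ∀ D : Set P, IsUIdeal 𝒰 D → ∀ 𝒞 : Set (Set P), (∀ C ∈ 𝒞, IsUIdeal 𝒰 C) →
    D ∩ GammaU 𝒰 (⋃₀ 𝒞) = GammaU 𝒰 (⋃ C ∈ 𝒞, D ∩ C)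

/-- The complete lattice of Γ-closed sets is a frame. -/
def ClosFrame (Γ : Set P → Set P) : Prop :=
  ∀ D : Set P, IsClosedIn Γ D → ∀ 𝒞 : Set (Set P), (∀ C ∈ 𝒞, IsClosedIn Γ C) →
    D ∩ Γ (⋃₀ 𝒞) = Γ (⋃ C ∈ 𝒞, D ∩ C)

/-!
The down-closure `S ↦ S↓` is the least standard closure operator, and its closed sets are exactly
the down-sets. Every `Γ`-closed set is a down-set, hence so is any union of them. Applying the
meet-preservation hypothesis to `Γ' = (·)↓` and the down-sets `D` and `⋃ 𝒞` gives
`Γ (D ∩ ⋃ 𝒞) = Γ D ∩ Γ (⋃ 𝒞) = D ∩ Γ (⋃ 𝒞)`, which is the frame distributive law.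
-/

lemma isClosedIn_dcl_iff {C : Set P} : IsClosedIn dcl C ↔ IsLowerSet C := by
  constructor
  · intro hC a b hba ha
    rw [← hC]
    exact ⟨a, ha, hba⟩
  · intro hC
    apply subset_antisymm
    · rintro p ⟨s, hs, hps⟩
      exact hC hps hs
    · exact fun p hp => ⟨p, hp, le_rfl⟩

lemma isStdClosure_dcl : IsStdClosure (dcl (P := P)) := by
  refine ⟨fun S p hp => ⟨p, hp, le_rfl⟩, fun S T hST p ⟨s, hs, hps⟩ => ⟨s, hST hs, hps⟩,
    fun S => isClosedIn_dcl_iff.2 ?_, fun p => ?_⟩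
  · rintro a b hba ⟨s, hs, has⟩
    exact ⟨s, hs, hba.trans has⟩
  · ext q
    simp [dcl, pd]

namespace IsStdClosure

variable {Γ : Set P → Set P}

lemma dcl_subset (hΓ : IsStdClosure Γ) (S : Set P) : dcl S ⊆ Γ S := by
  rintro p ⟨s, hs, hps⟩
  have hp : p ∈ Γ {s} := by rw [hΓ.2.2.2 s]; exact hps
  exact hΓ.2.1 _ _ (Set.singleton_subset_iff.2 hs) hp

lemma isLowerSet_of_isClosedIn (hΓ : IsStdClosure Γ) {C : Set P} (hC : IsClosedIn Γ C) :
    IsLowerSet C := by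
  intro a b hba ha
  rw [← hC]
  exact hΓ.dcl_subset C ⟨a, ha, hba⟩

end IsStdClosure

theorem stmt2 (Γ : Set P → Set P) (hΓ : IsStdClosure Γ)
    (h : ∀ Γ' : Set P → Set P, IsStdClosure Γ' → (∀ S, Γ' S ⊆ Γ S) →
      ∀ C₁ C₂ : Set P, IsClosedIn Γ' C₁ → IsClosedIn Γ' C₂ →
        Γ (C₁ ∩ C₂) = Γ C₁ ∩ Γ C₂) :
    ClosFrame Γ := by
  intro D hD 𝒞 h𝒞
  have hD_lower : IsLowerSet D := hΓ.isLowerSet_of_isClosedIn hD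
  have h𝒞_lower : IsLowerSet (⋃₀ 𝒞) :=
    isLowerSet_sUnion fun C hC => hΓ.isLowerSet_of_isClosedIn (h𝒞 C hC)
  have hmeet := h dcl isStdClosure_dcl hΓ.dcl_subset D (⋃₀ 𝒞)
    (isClosedIn_dcl_iff.2 hD_lower) (isClosedIn_dcl_iff.2 h𝒞_lower)
  rw [← Set.inter_iUnion₂, ← Set.sUnion_eq_biUnion, hmeet, hD]
end

section
/- Let P be a poset, 𝒰 a join-specification for P, L a complete lattice, and e : P → L an order embedding such that e(⋁S) = ⋁ e[S] for all S ∈ 𝒰. Then there is a unique completely join-preserving map h : I_𝒰 → L with h(p↓) = e(p) for all p ∈ P. -/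
variable {P : Type*} [PartialOrder P]

theorem stmt3 {L : Type*} [CompleteLattice L] (𝒰 : Set (Set P)) (hU : IsJoinSpec 𝒰)
    (e : P → L) (he : ∀ a b : P, e a ≤ e b ↔ a ≤ b)
    (hpres : ∀ S ∈ 𝒰, ∀ x : P, IsLUB S x → e x = sSup (e '' S)) :
    ∃ h : Set P → L,
      ((∀ 𝒞 : Set (Set P), (∀ C ∈ 𝒞, IsUIdeal 𝒰 C) →
          h (GammaU 𝒰 (⋃₀ 𝒞)) = sSup (h '' 𝒞)) ∧
        ∀ p : P, h (pd p) = e p) ∧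
      ∀ h' : Set P → L,
        ((∀ 𝒞 : Set (Set P), (∀ C ∈ 𝒞, IsUIdeal 𝒰 C) →
            h' (GammaU 𝒰 (⋃₀ 𝒞)) = sSup (h' '' 𝒞)) ∧
          ∀ p : P, h' (pd p) = e p) →
        ∀ I : Set P, IsUIdeal 𝒰 I → h' I = h I := by
    classical
  set h : Set P → L := fun S => sSup (e '' S) with hh
  have key : ∀ S : Set P, sSup (e '' GammaU 𝒰 S) = sSup (e '' S) := by
    intro S
    apply le_antisymm
    · apply sSup_le
      rintro _ ⟨p, hp, rfl⟩
      have hmem : p ∈ {q : P | e q ≤ sSup (e '' S)} := by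
        apply hp
        constructor
        · constructor
          · intro a b hba ha
            exact le_trans ((he b a).2 hba) ha
          · intro T hT hTsub x hx
            show e x ≤ sSup (e '' S)
            rw [hpres T hT x hx]
            exact sSup_le (by rintro _ ⟨t, ht, rfl⟩; exact hTsub ht)
        · intro q hq
          exact le_sSup ⟨q, hq, rfl⟩
      exact hmem
    · apply sSup_le_sSup
      apply Set.image_mono
      intro p hp I hI
      exact hI.2 hp
  refine ⟨h, ⟨?_, ?_⟩, ?_⟩
  · intro 𝒞 _
    rw [hh]
    simp only
    rw [key]
    apply le_antisymm
    · apply sSup_le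
      rintro _ ⟨p, ⟨C, hC, hpC⟩, rfl⟩
      calc e p ≤ sSup (e '' C) := le_sSup ⟨p, hpC, rfl⟩
        _ ≤ sSup (h '' 𝒞) := le_sSup ⟨C, hC, rfl⟩
    · apply sSup_le
      rintro _ ⟨C, hC, rfl⟩
      apply sSup_le
      rintro _ ⟨p, hpC, rfl⟩
      exact le_sSup ⟨p, ⟨C, hC, hpC⟩, rfl⟩
  · intro p
    apply le_antisymm
    · apply sSup_le
      rintro _ ⟨q, hq, rfl⟩
      exact (he q p).2 hq
    · exact le_sSup ⟨p, le_refl p, rfl⟩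
  · rintro hf ⟨hfjoin, hfpd⟩ I hI
    have hpdI : ∀ p : P, IsUIdeal 𝒰 (pd p) := by
      intro p
      constructor
      · intro a b hba ha
        exact le_trans hba ha
      · intro T hT hTsub x hx
        exact hx.2 hTsub
    have hCideal : ∀ C ∈ pd '' I, IsUIdeal 𝒰 C := by
      rintro _ ⟨p, _, rfl⟩; exact hpdI p
    have hunion : ⋃₀ (pd '' I) = I := by
      apply Set.Subset.antisymm
      · rintro x ⟨_, ⟨p, hp, rfl⟩, hx⟩
        exact hI.1 hx hp
      · intro p hp
        exact ⟨pd p, ⟨p, hp, rfl⟩, le_refl p⟩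
    have hGI : GammaU 𝒰 I = I := by
      apply Set.Subset.antisymm
      · intro x hx
        exact hx I ⟨hI, Set.Subset.refl I⟩
      · intro p hp I2 hI2
        exact hI2.2 hp
    have h1 := hfjoin (pd '' I) hCideal
    rw [hunion, hGI] at h1
    rw [h1, hh]
    simp only
    congr 1
    rw [← Set.image_comp]
    apply Set.image_congr
    intro p _
    exact hfpd p
end

section
/- For a poset P and join-specification 𝒰, the canonical map η : P → I_𝒰 with η(p) = p↓ is an order embedding that preserves all existing meets of P and all joins of sets in 𝒰, and η[P] is join-dense in I_𝒰. -/
variable {P : Type*} [PartialOrder P]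

lemma gammaU_isUIdeal (𝒰 : Set (Set P)) (S : Set P) : IsUIdeal 𝒰 (GammaU 𝒰 S) := by
  constructor
  · intro a b hba ha I hI
    exact hI.1.1 hba (ha I hI)
  · intro T hT hTsub x hx I hI
    exact hI.1.2 T hT (fun t ht => hTsub ht I hI) x hx

lemma subset_gammaU (𝒰 : Set (Set P)) (S : Set P) : S ⊆ GammaU 𝒰 S :=
  fun s hs I hI => hI.2 hs

theorem stmt4 (𝒰 : Set (Set P)) (hU : IsJoinSpec 𝒰) :
    (∀ p : P, IsUIdeal 𝒰 (pd p)) ∧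
    (∀ a b : P, pd a ⊆ pd b ↔ a ≤ b) ∧
    (∀ S : Set P, ∀ x : P, IsGLB S x → pd x = ⋂ s ∈ S, pd s) ∧
    (∀ S ∈ 𝒰, ∀ x : P, IsLUB S x → pd x = GammaU 𝒰 (⋃ s ∈ S, pd s)) ∧
    (∀ I : Set P, IsUIdeal 𝒰 I → I = GammaU 𝒰 (⋃ p ∈ I, pd p)) := by
  have hpd : ∀ p : P, IsUIdeal 𝒰 (pd p) := by
    intro p
    refine ⟨fun a b hba ha => le_trans hba ha, ?_⟩
    intro S hS hSsub x hx
    exact hx.2 fun s hs => hSsub hs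
  refine ⟨hpd, ?_, ?_, ?_, ?_⟩
  · intro a b
    exact ⟨fun h => h (le_refl a), fun h q hq => le_trans hq h⟩
  · intro S x hx
    ext q
    simp only [pd, Set.mem_setOf_eq, Set.mem_iInter]
    exact ⟨fun h s hs => le_trans h (hx.1 hs), fun h => hx.2 h⟩
  · intro S hS x hx
    apply subset_antisymm
    · -- pd x ⊆ GammaU
      have hxin : x ∈ GammaU 𝒰 (⋃ s ∈ S, pd s) := by
        refine (gammaU_isUIdeal 𝒰 _).2 S hS ?_ x hx
        intro s hs
        exact subset_gammaU 𝒰 _ (Set.mem_biUnion hs (le_refl s))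
      intro q hq
      exact (gammaU_isUIdeal 𝒰 _).1 hq hxin
    · apply Set.sInter_subset_of_mem
      refine ⟨hpd x, ?_⟩
      intro q hq
      simp only [Set.mem_iUnion] at hq
      obtain ⟨s, hs, hqs⟩ := hq
      exact le_trans hqs (hx.1 hs)
  · intro I hI
    have hunion : (⋃ p ∈ I, pd p) = I := by
      ext q
      simp only [Set.mem_iUnion, pd, Set.mem_setOf_eq]
      exact ⟨fun ⟨p, hp, hqp⟩ => hI.1 hqp hp, fun h => ⟨q, h, le_refl q⟩⟩
    rw [hunion]
    apply subset_antisymm (subset_gammaU 𝒰 I)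
    exact Set.sInter_subset_of_mem ⟨hI, subset_refl I⟩
end

section
/- Let P be a poset, 𝒰 a join-specification, and Γ_𝒰(S) the smallest 𝒰-ideal containing S. If S ⊆ P, p ∈ P is an upper bound of S, and p ∈ Γ_𝒰(S), then p = ⋁S. -/
variable {P : Type*} [PartialOrder P]

theorem isUIdeal_pd (𝒰 : Set (Set P)) (q : P) : IsUIdeal 𝒰 (pd q) :=
  ⟨fun _ _ hba ha => le_trans hba ha, fun _ _ hT _ hx => hx.2 hT⟩

theorem gammaU_subset_of_isUIdeal {𝒰 : Set (Set P)} {S I : Set P} (hI : IsUIdeal 𝒰 I)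
    (hSI : S ⊆ I) : GammaU 𝒰 S ⊆ I :=
  Set.sInter_subset_of_mem ⟨hI, hSI⟩

theorem stmt5_general (𝒰 : Set (Set P)) (S : Set P) (p : P)
    (hub : p ∈ upperBounds S) (hp : p ∈ GammaU 𝒰 S) : IsLUB S p :=
  ⟨hub, fun q hq => gammaU_subset_of_isUIdeal (isUIdeal_pd 𝒰 q) (fun _ hs => hq hs) hp⟩

theorem stmt5 (𝒰 : Set (Set P)) (hU : IsJoinSpec 𝒰) (S : Set P) (p : P)
    (hub : p ∈ upperBounds S) (hp : p ∈ GammaU 𝒰 S) : IsLUB S p :=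
  stmt5_general 𝒰 S p hub hp
end

section
/- Let P be a poset, 𝒰 a join-specification, and Γ_𝒰 the closure operator sending S to the smallest 𝒰-ideal containing S. Define 𝒰⁺ = {S ⊆ P : ⋁S exists and ⋁S ∈ Γ_𝒰(S)}. If S ⊆ P and ⋁S exists with ⋁S ∈ Γ_𝒰(S), then S ∈ 𝒰⁺ and moreover every 𝒰⁺-ideal is a 𝒰-ideal and conversely, so Γ_{𝒰⁺} = Γ_𝒰. -/
variable {P : Type*} [PartialOrder P]

theorem stmt6 (𝒰 : Set (Set P)) (hU : IsJoinSpec 𝒰) :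
    (∀ S : Set P, ∀ x : P, IsLUB S x → x ∈ GammaU 𝒰 S → S ∈ UPlus 𝒰) ∧
    (∀ I : Set P, IsUIdeal (UPlus 𝒰) I ↔ IsUIdeal 𝒰 I) ∧
    (∀ S : Set P, GammaU (UPlus 𝒰) S = GammaU 𝒰 S) := by
  have key : ∀ I : Set P, IsUIdeal (UPlus 𝒰) I ↔ IsUIdeal 𝒰 I := by
    intro I
    constructor
    · rintro ⟨hlow, hcl⟩
      refine ⟨hlow, ?_⟩
      intro S hS hSI x hx
      apply hcl S _ hSI x hx
      obtain ⟨y, hy⟩ := hU.1 S hS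
      refine ⟨y, hy, ?_⟩
      intro J hJ
      exact hJ.1.2 S hS hJ.2 y hy
    · rintro ⟨hlow, hcl⟩
      refine ⟨hlow, ?_⟩
      intro S hS hSI x hx
      obtain ⟨y, hy, hyG⟩ := hS
      have : y = x := hy.unique hx
      subst this
      exact hyG I ⟨⟨hlow, hcl⟩, hSI⟩
  refine ⟨?_, key, ?_⟩
  · intro S x hx hxG
    exact ⟨x, hx, hxG⟩
  · intro S
    ext p
    simp only [GammaU, Set.mem_sInter, Set.mem_setOf_eq, key]
end

section
/- If I is a nonempty indexing set and 𝒰_i is a maximal join-specification for a poset P for each i ∈ I, then ⋂_I 𝒰_i is also a maximal join-specification. -/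
variable {P : Type*} [PartialOrder P]

theorem IsUIdeal.of_subset {𝒰 𝒱 : Set (Set P)} (h : 𝒰 ⊆ 𝒱) {I : Set P}
    (hI : IsUIdeal 𝒱 I) : IsUIdeal 𝒰 I :=
  ⟨hI.1, fun S hS => hI.2 S (h hS)⟩

theorem GammaU_mono {𝒰 𝒱 : Set (Set P)} (h : 𝒰 ⊆ 𝒱) (S : Set P) :
    GammaU 𝒰 S ⊆ GammaU 𝒱 S :=
  fun _ hx I hI => hx I ⟨hI.1.of_subset h, hI.2⟩

theorem UPlus_mono {𝒰 𝒱 : Set (Set P)} (h : 𝒰 ⊆ 𝒱) : UPlus 𝒰 ⊆ UPlus 𝒱 :=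
  fun S ⟨x, hx, hxΓ⟩ => ⟨x, hx, GammaU_mono h S hxΓ⟩

theorem lub_mem_GammaU {𝒰 : Set (Set P)} {S : Set P} (hS : S ∈ 𝒰) {x : P} (hx : IsLUB S x) :
    x ∈ GammaU 𝒰 S :=
  fun _ hI => hI.1.2 S hS hI.2 x hx

theorem subset_UPlus {𝒰 : Set (Set P)} (h𝒰 : IsJoinSpec 𝒰) : 𝒰 ⊆ UPlus 𝒰 :=
  fun S hS => (h𝒰.1 S hS).elim fun x hx => ⟨x, hx, lub_mem_GammaU hS hx⟩

theorem IsJoinSpec.iInter {ι : Type*} [Nonempty ι] {𝒰 : ι → Set (Set P)}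
    (hU : ∀ i, IsJoinSpec (𝒰 i)) : IsJoinSpec (⋂ i, 𝒰 i) := by
  obtain ⟨i⟩ := ‹Nonempty ι›
  exact ⟨fun S hS => (hU i).1 S (Set.mem_iInter.mp hS i),
    fun p => Set.mem_iInter.mpr fun j => (hU j).2 p⟩

theorem stmt8 {ι : Type*} [Nonempty ι] (𝒰 : ι → Set (Set P))
    (hU : ∀ i, IsJoinSpec (𝒰 i)) (hmax : ∀ i, UPlus (𝒰 i) = 𝒰 i) :
    IsJoinSpec (⋂ i, 𝒰 i) ∧ UPlus (⋂ i, 𝒰 i) = ⋂ i, 𝒰 i := by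
  have hspec := IsJoinSpec.iInter hU
  refine ⟨hspec, subset_antisymm ?_ (subset_UPlus hspec)⟩
  exact Set.subset_iInter fun i => hmax i ▸ UPlus_mono (Set.iInter_subset 𝒰 i)
end

section
/- Let 𝒰 be a join-specification for a poset P, and define Υ_𝒰(S) = {⋁T : T ∈ 𝒰⁺, T ⊆ S↓}. For S ∈ 𝒰 (or more generally any S ⊆ P), Υ_𝒰(S) equals the smallest 𝒰-ideal containing S if and only if Υ_𝒰(S) is down-closed. -/
variable {P : Type*} [PartialOrder P]

theorem stmt11 (𝒰 : Set (Set P)) (hU : IsJoinSpec 𝒰) (S : Set P) :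
    Upsilon 𝒰 S = GammaU 𝒰 S ↔ IsLowerSet (Upsilon 𝒰 S) := by
  constructor
  · intro h; rw [h]; exact (gammaU_isUIdeal 𝒰 S).1
  · intro hlow
    apply Set.Subset.antisymm
    · -- Upsilon ⊆ GammaU
      rintro x ⟨T, ⟨y, hyT, hyG⟩, hTd, hTx⟩
      have hxy : y = x := hyT.unique hTx
      intro I hI
      have hTI : T ⊆ I := by
        intro t ht
        obtain ⟨s, hsS, hts⟩ := hTd ht
        exact hI.1.1 hts (hI.2 hsS)
      exact hxy ▸ hyG I ⟨hI.1, hTI⟩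
    · -- GammaU ⊆ Upsilon: Upsilon is a U-ideal containing S
      apply Set.sInter_subset_of_mem
      refine ⟨⟨hlow, ?_⟩, ?_⟩
      · -- join closure
        intro A hA hAsub x hx
        choose T hT1 hT2 hT3 using fun a (ha : a ∈ A) => hAsub ha
        set U : Set P := ⋃ (a : P) (ha : a ∈ A), T a ha with hUdef
        have hUsub : U ⊆ dcl S := by
          intro t ht
          simp only [hUdef, Set.mem_iUnion] at ht
          obtain ⟨a, ha, hta⟩ := ht
          exact hT2 a ha hta
        have hUlub : IsLUB U x := by
          constructor
          · intro t ht
            simp only [hUdef, Set.mem_iUnion] at ht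
            obtain ⟨a, ha, hta⟩ := ht
            exact le_trans ((hT3 a ha).1 hta) (hx.1 ha)
          · intro u hu
            apply hx.2
            intro a ha
            apply (hT3 a ha).2
            intro t ht
            exact hu (Set.mem_iUnion.2 ⟨a, Set.mem_iUnion.2 ⟨ha, ht⟩⟩)
        refine ⟨U, ⟨x, hUlub, ?_⟩, hUsub, hUlub⟩
        intro I hI
        have hAI : A ⊆ I := by
          intro a ha
          obtain ⟨y, hyl, hyG⟩ := hT1 a ha
          have : y = a := hyl.unique (hT3 a ha)
          refine this ▸ hyG I ⟨hI.1, ?_⟩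
          exact fun t ht => hI.2 (Set.mem_iUnion.2 ⟨a, Set.mem_iUnion.2 ⟨ha, ht⟩⟩)
        exact hI.1.2 A hA hAI x hx
      · -- S ⊆ Upsilon
        intro s hs
        refine ⟨{s}, ⟨s, isLUB_singleton, subset_gammaU 𝒰 {s} rfl⟩, ?_, isLUB_singleton⟩
        intro t ht
        exact ⟨s, hs, le_of_eq ht⟩
end

section
/- Let 𝒰 be a join-specification for a poset P such that for every S ⊆ P the smallest 𝒰-ideal containing S equals Υ_𝒰(S) = {⋁T : T ∈ 𝒰⁺, T ⊆ S↓}. Then the lattice I_𝒰 of 𝒰-ideals is a frame. -/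
variable {P : Type*} [PartialOrder P]

theorem stmt14 (𝒰 : Set (Set P)) (hU : IsJoinSpec 𝒰)
    (h : ∀ S : Set P, GammaU 𝒰 S = Upsilon 𝒰 S) : IdealFrame 𝒰 := by
  have hmin : ∀ (S I : Set P), IsUIdeal 𝒰 I → S ⊆ I → GammaU 𝒰 S ⊆ I := by
    intro S I hI hSI x hx
    exact hx I ⟨hI, hSI⟩
  have hext : ∀ S : Set P, S ⊆ GammaU 𝒰 S := by
    intro S x hx I hI
    exact hI.2 hx
  intro D hD 𝒞 h𝒞
  apply Set.Subset.antisymm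
  · rintro x ⟨hxD, hxG⟩
    rw [h] at hxG
    obtain ⟨T, hTU, hTd, hTx⟩ := hxG
    rw [h]
    refine ⟨T, hTU, ?_, hTx⟩
    intro t ht
    obtain ⟨s, hs, hts⟩ := hTd ht
    obtain ⟨C, hC, hsC⟩ := hs
    refine ⟨t, ?_, le_refl t⟩
    have htD : t ∈ D := hD.1 (hTx.1 ht) hxD
    have htC : t ∈ C := (h𝒞 C hC).1 hts hsC
    exact Set.mem_biUnion hC ⟨htD, htC⟩
  · have hsub : GammaU 𝒰 (⋃ C ∈ 𝒞, D ∩ C) ⊆ D :=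
      hmin _ D hD (by intro t ht; obtain ⟨C, hC, htD, htC⟩ := Set.mem_iUnion₂.1 ht; exact htD)
    have hGI : IsUIdeal 𝒰 (GammaU 𝒰 (⋃₀ 𝒞)) := by
      constructor
      · intro a b hba ha I hI
        exact hI.1.1 hba (ha I hI)
      · intro S hS hSsub y hy I hI
        exact hI.1.2 S hS (fun z hz => hSsub hz I hI) y hy
    have hsub2 : GammaU 𝒰 (⋃ C ∈ 𝒞, D ∩ C) ⊆ GammaU 𝒰 (⋃₀ 𝒞) := by
      apply hmin _ _ hGI
      intro t ht
      obtain ⟨C, hC, _, htC⟩ := Set.mem_iUnion₂.1 ht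
      exact hext _ ⟨C, hC, htC⟩
    exact fun x hx => ⟨hsub hx, hsub2 hx⟩
end

section
/- Let e₁ : P → L₁ and e₂ : P → L₂ be join-completions of a poset P, with associated standard closure operators Γ₁, Γ₂ (closed sets e_i^{-1}(x↓) for x ∈ L_i). If g : L₂ → L₁ is an order embedding with g ∘ e₂ = e₁, then Γ₁ ≤ Γ₂, and g is right adjoint to the unique completely join-preserving map f : L₁ → L₂ fixing P (i.e., f(a) ≤ b ⟺ a ≤ g(b) for all a ∈ L₁, b ∈ L₂). -/
/-!
The left adjoint of `g` is forced: on `e₁ p` it must be `e₂ p`, and join-density of `e₁` then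
leaves only `f a = ⋁ {e₂ p | e₁ p ≤ a}`. Since `g` reflects the order and `g ∘ e₂ = e₁`,
`f a ≤ b` says that every `e₁ p ≤ a` lies below `g b`, which by join-density is `a ≤ g b`.
A left adjoint preserves all joins, and transporting `e₁ p ≤ ⋁ e₁[S]` along it gives `Γ₁ ≤ Γ₂`.
-/

variable {P : Type*} [PartialOrder P]

def GammaE {P : Type*} [PartialOrder P] {L : Type*} [CompleteLattice L]
    (e : P → L) (S : Set P) : Set P :=
  {p : P | e p ≤ sSup (e '' S)}

section JoinDense

variable {α L₁ L₂ : Type*} [CompleteLattice L₁] [CompleteLattice L₂] {e₁ : α → L₁}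

theorem le_of_forall_range_le (hd₁ : ∀ x : L₁, x = sSup {y | y ∈ Set.range e₁ ∧ y ≤ x})
    {a c : L₁} (h : ∀ p, e₁ p ≤ a → e₁ p ≤ c) : a ≤ c := by
  rw [hd₁ a]
  exact sSup_le fun _ ⟨⟨p, hp⟩, hpa⟩ => hp ▸ h p (hp ▸ hpa)

theorem eq_of_map_sSup_of_eqOn_range (hd₁ : ∀ x : L₁, x = sSup {y | y ∈ Set.range e₁ ∧ y ≤ x})
    {f f' : L₁ → L₂} (hf : ∀ A : Set L₁, f (sSup A) = sSup (f '' A))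
    (hf' : ∀ A : Set L₁, f' (sSup A) = sSup (f' '' A)) (hff' : ∀ p, f (e₁ p) = f' (e₁ p)) :
    f = f' := by
  funext a
  have hagree : Set.EqOn f f' {y | y ∈ Set.range e₁ ∧ y ≤ a} := by
    rintro _ ⟨⟨p, rfl⟩, -⟩
    exact hff' p
  rw [hd₁ a, hf, hf', hagree.image_eq]

def joinExtend (e₁ : α → L₁) (e₂ : α → L₂) (a : L₁) : L₂ :=
  sSup (e₂ '' {p | e₁ p ≤ a})

theorem gc_joinExtend {e₂ : α → L₂} (hd₁ : ∀ x : L₁, x = sSup {y | y ∈ Set.range e₁ ∧ y ≤ x})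
    {g : L₂ → L₁} (hg : ∀ a b : L₂, g a ≤ g b ↔ a ≤ b) (hge : ∀ p, g (e₂ p) = e₁ p) :
    GaloisConnection (joinExtend e₁ e₂) g := by
  have he₂ : ∀ p b, e₂ p ≤ b ↔ e₁ p ≤ g b := fun p b => by rw [← hge p, hg]
  intro a b
  simp only [joinExtend, sSup_le_iff, Set.forall_mem_image, Set.mem_ofPred_eq, he₂]
  exact ⟨le_of_forall_range_le hd₁, fun hab p hpa => hpa.trans hab⟩

theorem GaloisConnection.l_comp_eq_of_u_comp {f : L₁ → L₂} {g : L₂ → L₁}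
    (gc : GaloisConnection f g) (hg : Function.Injective g) {e₂ : α → L₂}
    (hge : ∀ p, g (e₂ p) = e₁ p) (p : α) : f (e₁ p) = e₂ p :=
  hg (by rw [← hge p, gc.u_l_u_eq_u])

end JoinDense

theorem gammaE_subset_of_map_sSup {L₁ L₂ : Type*} [CompleteLattice L₁] [CompleteLattice L₂]
    {e₁ : P → L₁} {e₂ : P → L₂} {f : L₁ → L₂}
    (hf : ∀ A : Set L₁, f (sSup A) = sSup (f '' A)) (hfe : ∀ p, f (e₁ p) = e₂ p) (S : Set P) :
    GammaE e₁ S ⊆ GammaE e₂ S := by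
  intro p (hp : e₁ p ≤ sSup (e₁ '' S))
  have hmono : Monotone f := OrderHomClass.mono (⟨f, hf⟩ : sSupHom L₁ L₂)
  calc e₂ p = f (e₁ p) := (hfe p).symm
    _ ≤ f (sSup (e₁ '' S)) := hmono hp
    _ = sSup (e₂ '' S) := by rw [hf, Set.image_image, funext hfe]

theorem stmt19_general {L₁ L₂ : Type*} [CompleteLattice L₁] [CompleteLattice L₂]
    (e₁ : P → L₁) (e₂ : P → L₂)
    (hd₁ : ∀ x : L₁, x = sSup {y | y ∈ Set.range e₁ ∧ y ≤ x})
    (g : L₂ → L₁) (hg : ∀ a b : L₂, g a ≤ g b ↔ a ≤ b)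
    (hge : ∀ p : P, g (e₂ p) = e₁ p) :
    (∀ S : Set P, GammaE e₁ S ⊆ GammaE e₂ S) ∧
    ∃ f : L₁ → L₂,
      ((∀ A : Set L₁, f (sSup A) = sSup (f '' A)) ∧ ∀ p : P, f (e₁ p) = e₂ p) ∧
      (∀ f' : L₁ → L₂,
          ((∀ A : Set L₁, f' (sSup A) = sSup (f' '' A)) ∧ ∀ p : P, f' (e₁ p) = e₂ p) →
          f' = f) ∧
      ∀ a : L₁, ∀ b : L₂, f a ≤ b ↔ a ≤ g b := by
  have gc := gc_joinExtend hd₁ hg hge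
  have hjoin : ∀ A : Set L₁, joinExtend e₁ e₂ (sSup A) = sSup (joinExtend e₁ e₂ '' A) :=
    fun A => by rw [gc.l_sSup, sSup_image]
  have hinj : Function.Injective g := fun a b h =>
    le_antisymm ((hg a b).mp h.le) ((hg b a).mp h.ge)
  have hfix := gc.l_comp_eq_of_u_comp hinj hge
  refine ⟨gammaE_subset_of_map_sSup hjoin hfix, joinExtend e₁ e₂, ⟨hjoin, hfix⟩, ?_, gc⟩
  rintro f' ⟨hf'join, hf'fix⟩
  exact eq_of_map_sSup_of_eqOn_range hd₁ hf'join hjoin fun p => (hf'fix p).trans (hfix p).symm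

theorem stmt19 {L₁ L₂ : Type*} [CompleteLattice L₁] [CompleteLattice L₂]
    (e₁ : P → L₁) (e₂ : P → L₂)
    (he₁ : ∀ a b : P, e₁ a ≤ e₁ b ↔ a ≤ b)
    (hd₁ : ∀ x : L₁, x = sSup {y | y ∈ Set.range e₁ ∧ y ≤ x})
    (he₂ : ∀ a b : P, e₂ a ≤ e₂ b ↔ a ≤ b)
    (hd₂ : ∀ x : L₂, x = sSup {y | y ∈ Set.range e₂ ∧ y ≤ x})
    (g : L₂ → L₁) (hg : ∀ a b : L₂, g a ≤ g b ↔ a ≤ b)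
    (hge : ∀ p : P, g (e₂ p) = e₁ p) :
    (∀ S : Set P, GammaE e₁ S ⊆ GammaE e₂ S) ∧
    ∃ f : L₁ → L₂,
      ((∀ A : Set L₁, f (sSup A) = sSup (f '' A)) ∧ ∀ p : P, f (e₁ p) = e₂ p) ∧
      (∀ f' : L₁ → L₂,
          ((∀ A : Set L₁, f' (sSup A) = sSup (f' '' A)) ∧ ∀ p : P, f' (e₁ p) = e₂ p) →
          f' = f) ∧
      ∀ a : L₁, ∀ b : L₂, f a ≤ b ↔ a ≤ g b :=
  stmt19_general e₁ e₂ hd₁ g hg hge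
end
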